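/- arXiv:1809.08900 — 2 statements merged into one kernel-verified Lean document; each statement's English description precedes it below -/
import Mathlib

section
/- Let G and H be graphs where every component of G has at least three vertices and H ∈ 𝒢, and let S be an edge metric basis for the lexicographic product G[H]. If g ∈ V(G) has a satellite g' ∈ V(G), then the layer {g} × V(H) or the layer {g'} × V(H) is entirely contained in S. -/
open SimpleGraph

variable {V W : Type*}

/-- Distance (in `ℕ∞`) from a vertex to an edge: the minimum of the distances
to the two endpoints. -/
noncomputable def edgeDist (G : SimpleGraph V) (v : V) (e : Sym2 V) : ℕ∞ :=
  Sym2.lift ⟨fun a b => min (G.edist v a) (G.edist v b),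
    fun a b => min_comm _ _⟩ e

/-- A set of vertices is an edge metric generator if every pair of distinct
edges is distinguished by some vertex of the set. -/
def IsEdgeMetricGenerator (G : SimpleGraph V) (S : Set V) : Prop :=
  ∀ e₁ ∈ G.edgeSet, ∀ e₂ ∈ G.edgeSet, e₁ ≠ e₂ →
    ∃ w ∈ S, edgeDist G w e₁ ≠ edgeDist G w e₂

/-- The edge metric dimension: minimum cardinality of an edge metric generator. -/
noncomputable def edim (G : SimpleGraph V) : ℕ :=
  sInf {n | ∃ S : Set V, S.ncard = n ∧ IsEdgeMetricGenerator G S}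


/-- The join of two graphs: disjoint union plus all edges across. -/
def joinGraph (G : SimpleGraph V) (H : SimpleGraph W) : SimpleGraph (V ⊕ W) where
  Adj x y := match x, y with
    | .inl a, .inl b => G.Adj a b
    | .inr a, .inr b => H.Adj a b
    | .inl _, .inr _ => True
    | .inr _, .inl _ => True
  symm := ⟨by rintro (a | a) (b | b) h <;> simp_all [SimpleGraph.adj_comm]⟩
  loopless := ⟨by
    rintro (a | a) h
    · exact G.irrefl h
    · exact H.irrefl h⟩

/-- A total dominating set: every vertex has a neighbor in the set. -/
def IsTotalDomSet (G : SimpleGraph V) (D : Set V) : Prop :=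
  ∀ v : V, ∃ d ∈ D, G.Adj v d

/-- The total domination number. -/
noncomputable def totalDomNum (G : SimpleGraph V) : ℕ :=
  sInf {n | ∃ D : Set V, D.ncard = n ∧ IsTotalDomSet G D}

/-- The class 𝒢: for every vertex `u` there is a neighbor `v`
such that `{u, v}` is a minimum total dominating set. -/
def InClassG (G : SimpleGraph V) : Prop :=
  ∀ u : V, ∃ v : V, G.Adj u v ∧ IsTotalDomSet G {u, v} ∧
    ({u, v} : Set V).ncard = totalDomNum G

/-- Lexicographic product `G[H]`. -/
def lexProd (G : SimpleGraph V) (H : SimpleGraph W) : SimpleGraph (V × W) where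
  Adj x y := G.Adj x.1 y.1 ∨ (x.1 = y.1 ∧ H.Adj x.2 y.2)
  symm := by refine ⟨?_⟩; rintro ⟨g, h⟩ ⟨g', h'⟩ (hadj | ⟨rfl, hadj⟩)
             · exact Or.inl hadj.symm
             · exact Or.inr ⟨rfl, hadj.symm⟩
  loopless := by refine ⟨?_⟩; rintro ⟨g, h⟩ (hadj | ⟨-, hadj⟩)
                 · exact G.irrefl hadj
                 · exact H.irrefl hadj

/-- Corona product `G ⊙ H`: vertex `(g, none)` is the vertex `g` of `G`, and
`(g, some h)` is the vertex `h` of the copy of `H` attached to `g`. -/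
def corona (G : SimpleGraph V) (H : SimpleGraph W) : SimpleGraph (V × Option W) where
  Adj x y := match x, y with
    | (g, none), (g', none) => G.Adj g g'
    | (g, none), (g', some _) => g = g'
    | (g, some _), (g', none) => g = g'
    | (g, some h), (g', some h') => g = g' ∧ H.Adj h h'
  symm := ⟨by rintro ⟨g, (_ | h)⟩ ⟨g', (_ | h')⟩ hadj <;>
             simp_all [SimpleGraph.adj_comm, eq_comm]⟩
  loopless := ⟨by rintro ⟨g, (_ | h)⟩ hadj <;> simp_all⟩

/-- The closed neighborhood of a vertex. -/
def closedNbhd (G : SimpleGraph V) (u : V) : Set V :=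
  insert u (G.neighborSet u)

/-- `u` and `v` are false twins: equal open neighborhoods. -/
def FalseTwin (G : SimpleGraph V) (u v : V) : Prop :=
  G.neighborSet u = G.neighborSet v

/-- `u` and `v` are true twins: equal closed neighborhoods. -/
def TrueTwin (G : SimpleGraph V) (u v : V) : Prop :=
  closedNbhd G u = closedNbhd G v

/-- The union of the closed neighborhoods of the two endpoints of an edge. -/
def edgeNbhd (G : SimpleGraph V) : Sym2 V → Set V :=
  Sym2.lift ⟨fun a b => closedNbhd G a ∪ closedNbhd G b, fun _ _ => Set.union_comm _ _⟩

/-- Two edges are twin edges: `N[u] ∪ N[v] = N[x] ∪ N[y]`. -/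
def TwinEdges (G : SimpleGraph V) (e f : Sym2 V) : Prop :=
  edgeNbhd G e = edgeNbhd G f

/-- The set of edges lying in nontrivial edge-twin classes. -/
def nontrivTwinEdges (G : SimpleGraph V) : Set (Sym2 V) :=
  {e ∈ G.edgeSet | ∃ f ∈ G.edgeSet, f ≠ e ∧ TwinEdges G e f}

/-- `q(G)`: the number of edges lying in nontrivial edge-twin classes. -/
noncomputable def qval (G : SimpleGraph V) : ℕ := (nontrivTwinEdges G).ncard

/-- `q'(G) = q(G) - m`, where `m` is the number of nontrivial edge-twin classes. -/
noncomputable def q'val (G : SimpleGraph V) : ℕ :=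
  qval G - (edgeNbhd G '' nontrivTwinEdges G).ncard

/-- The set of vertices lying in nontrivial false-twin classes. -/
def nontrivFalseTwins (G : SimpleGraph V) : Set V :=
  {v | ∃ u, u ≠ v ∧ FalseTwin G u v}

/-- The set of vertices lying in nontrivial true-twin classes. -/
def nontrivTrueTwins (G : SimpleGraph V) : Set V :=
  {v | ∃ u, u ≠ v ∧ TrueTwin G u v}

/-- `f'(G) = f(G) - k`: vertices in nontrivial false-twin classes minus the
number of such classes. -/
noncomputable def f'val (G : SimpleGraph V) : ℕ :=
  (nontrivFalseTwins G).ncard - (G.neighborSet '' nontrivFalseTwins G).ncard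

/-- `t'(G) = t(G) - ℓ`: vertices in nontrivial true-twin classes minus the
number of such classes. -/
noncomputable def t'val (G : SimpleGraph V) : ℕ :=
  (nontrivTrueTwins G).ncard - (closedNbhd G '' nontrivTrueTwins G).ncard

/-- A set of representatives for the twin deletion operation: it contains
exactly one vertex from each (false- or true-) twin equivalence class. -/
def IsTwinDeletionSet (G : SimpleGraph V) (R : Set V) : Prop :=
  ∀ v : V, ∃! r : V, r ∈ R ∧ (FalseTwin G v r ∨ TrueTwin G v r)

/-! If `(g,h)` and `(g',h')` both lie outside `S`, pick `h₀` with `{h, h₀}` a total dominating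
set of `H`. The edges `(g,h)(g,h₀)` and `(g,h₀)(g',h')` are then at the same distance from every
other vertex: from the layers of `g` and `g'` both distances are 0 or 1, and from any other layer
distances in `G[H]` are distances in `G`, where `g'` is never closer than `g` since
`N[g'] ⊆ N[g]`. -/

theorem SimpleGraph.edist_le_of_adj_edist_le_one {V' : Type*} {G : SimpleGraph V}
    {G' : SimpleGraph V'} (f : V → V') (hf : ∀ ⦃a b⦄, G.Adj a b → G'.edist (f a) (f b) ≤ 1)
    (u v : V) : G'.edist (f u) (f v) ≤ G.edist u v := by
  refine le_iInf fun p => ?_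
  induction p with
  | nil => simp
  | cons hadj q ih =>
    calc _ ≤ _ := SimpleGraph.edist_triangle
      _ ≤ 1 + q.length := add_le_add (hf hadj) ih
      _ = _ := by simp [add_comm]

theorem edist_le_one_of_mem_closedNbhd {G : SimpleGraph V} {g d : V}
    (hd : d ∈ closedNbhd G g) : G.edist g d ≤ 1 := by
  rcases hd with rfl | hgd
  · simp
  · exact (edist_eq_one_iff_adj.mpr hgd).le

theorem adj_of_closedNbhd_ssubset {G : SimpleGraph V} {g g' : V}
    (hsat : closedNbhd G g' ⊂ closedNbhd G g) : G.Adj g g' := by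
  rcases hsat.subset (Set.mem_insert g' _) with rfl | hadj
  · exact absurd rfl hsat.ne
  · exact hadj

theorem edist_le_of_closedNbhd_subset {G : SimpleGraph V} {g g' c : V}
    (hsub : closedNbhd G g' ⊆ closedNbhd G g) (hc : c ≠ g') :
    G.edist c g ≤ G.edist c g' := by
  rw [edist_comm, edist_comm (u := c)]
  refine le_iInf fun p => ?_
  cases p with
  | nil => exact absurd rfl hc
  | cons hadj q =>
    calc _ ≤ _ := SimpleGraph.edist_triangle
      _ ≤ 1 + q.length :=
        add_le_add (edist_le_one_of_mem_closedNbhd (hsub (Set.mem_insert_of_mem _ hadj)))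
          (edist_le q)
      _ = _ := by simp [add_comm]

section lexProd

variable {G : SimpleGraph V} {H : SimpleGraph W}

theorem lexProd_edist_of_ne {c a : V} (hca : c ≠ a) (z x : W) :
    (lexProd G H).edist (c, z) (a, x) = G.edist c a := by
  refine le_antisymm (le_iInf fun p => ?_) ?_
  · cases p with
    | nil => exact absurd rfl hca
    | @cons _ d _ hcd q =>
      calc _ ≤ (lexProd G H).edist (c, z) (d, x) + (lexProd G H).edist (d, x) (a, x) :=
            SimpleGraph.edist_triangle
        _ ≤ 1 + G.edist d a := by
          refine add_le_add (edist_eq_one_iff_adj.mpr (Or.inl hcd)).le ?_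
          exact edist_le_of_adj_edist_le_one (fun v => (v, x))
            (fun _ _ hab => (edist_eq_one_iff_adj.mpr (Or.inl hab)).le) d a
        _ ≤ 1 + q.length := add_le_add le_rfl (edist_le q)
        _ = _ := by simp [add_comm]
  · refine edist_le_of_adj_edist_le_one Prod.fst (fun a b hab => ?_) (c, z) (a, x)
    rcases hab with hab | ⟨hab, -⟩
    · exact (edist_eq_one_iff_adj.mpr hab).le
    · simp [hab]

end lexProd

@[simp]
theorem edgeDist_mk (G : SimpleGraph V) (v a b : V) :
    edgeDist G v s(a, b) = min (G.edist v a) (G.edist v b) := rfl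

theorem edgeDist_eq_one_of_adj {G : SimpleGraph V} {w a b : V} (hwa : w ≠ a) (hwb : w ≠ b)
    (hadj : G.Adj w a ∨ G.Adj w b) : edgeDist G w s(a, b) = 1 := by
  have ha : 1 ≤ G.edist w a := Order.one_le_iff_pos.mpr (edist_pos_of_ne hwa)
  have hb : 1 ≤ G.edist w b := Order.one_le_iff_pos.mpr (edist_pos_of_ne hwb)
  rcases hadj with hadj | hadj <;>
    simp [edist_eq_one_iff_adj.mpr hadj, ha, hb]

theorem lexProd_edgeDist_eq_of_satellite {G : SimpleGraph V} {H : SimpleGraph W}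
    {g g' : V} {h h' h₀ : W} (hsub : closedNbhd G g' ⊆ closedNbhd G g) (hgg' : G.Adj g g')
    (hdom : IsTotalDomSet H {h, h₀}) {w : V × W} (hw : w ≠ (g, h)) (hw' : w ≠ (g', h')) :
    edgeDist (lexProd G H) w s((g, h), (g, h₀)) =
      edgeDist (lexProd G H) w s((g, h₀), (g', h')) := by
  obtain ⟨c, z⟩ := w
  have hne := hgg'.ne
  by_cases hcg : c = g
  · subst hcg
    by_cases hz₀ : z = h₀
    · simp [hz₀]
    have hz : (c, z) ≠ (c, h₀) := by simpa using hz₀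
    obtain ⟨d, hd, hzd⟩ := hdom z
    rw [edgeDist_eq_one_of_adj hw hz, edgeDist_eq_one_of_adj hz (by simp [hne])
      (Or.inr (Or.inl hgg'))]
    rcases hd with rfl | rfl
    · exact Or.inl (Or.inr ⟨rfl, hzd⟩)
    · exact Or.inr (Or.inr ⟨rfl, hzd⟩)
  by_cases hcg' : c = g'
  · subst hcg'
    rw [edgeDist_eq_one_of_adj (by simp [hne.symm]) (by simp [hne.symm])
        (Or.inl (Or.inl hgg'.symm)),
      edgeDist_eq_one_of_adj (by simp [hne.symm]) hw' (Or.inl (Or.inl hgg'.symm))]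
  simp only [edgeDist_mk, lexProd_edist_of_ne hcg, lexProd_edist_of_ne hcg', min_self]
  exact (min_eq_left (edist_le_of_closedNbhd_subset hsub hcg')).symm

theorem lexProd_basis_satellite_general {V W : Type*} (G : SimpleGraph V) (H : SimpleGraph W)
    (hH : InClassG H) (S : Set (V × W))
    (hSgen : IsEdgeMetricGenerator (lexProd G H) S)
    (g g' : V) (hsat : closedNbhd G g' ⊂ closedNbhd G g) :
    {p : V × W | p.1 = g} ⊆ S ∨ {p : V × W | p.1 = g'} ⊆ S := by
  by_contra! hcon
  simp only [Set.not_subset] at hcon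
  obtain ⟨⟨⟨g₁, h⟩, hg₁ : g₁ = g, hS⟩, ⟨⟨g₂, h'⟩, hg₂ : g₂ = g', hS'⟩⟩ := hcon
  subst g₁ g₂
  have hgg' : G.Adj g g' := adj_of_closedNbhd_ssubset hsat
  obtain ⟨h₀, hh₀, hdom, -⟩ := hH h
  have hedges : s((g, h), (g, h₀)) ≠ s((g, h₀), (g', h')) := by
    simp [hh₀.ne, hgg'.ne]
  obtain ⟨w, hwS, hw⟩ := hSgen _ (Or.inr ⟨rfl, hh₀⟩) _ (Or.inl hgg') hedges
  exact hw (lexProd_edgeDist_eq_of_satellite hsat.subset hgg' hdom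
    (ne_of_mem_of_not_mem hwS hS) (ne_of_mem_of_not_mem hwS hS'))

theorem lexProd_basis_satellite {V W : Type*} [Fintype V] [Fintype W]
    (G : SimpleGraph V) (H : SimpleGraph W)
    (hG : ∀ v : V, 3 ≤ (G.connectedComponentMk v).supp.ncard)
    (hH : InClassG H) (S : Set (V × W))
    (hSgen : IsEdgeMetricGenerator (lexProd G H) S)
    (hSmin : S.ncard = edim (lexProd G H))
    (g g' : V) (hsat : closedNbhd G g' ⊂ closedNbhd G g) :
    {p : V × W | p.1 = g} ⊆ S ∨ {p : V × W | p.1 = g'} ⊆ S :=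
  lexProd_basis_satellite_general G H hH S hSgen g g' hsat
end

section
/- For any n ≥ 3, edim(P_n ⊙ K_1) = 2, where P_n is the path on n vertices and P_n ⊙ K_1 is the caterpillar obtained by attaching one pendant vertex to each vertex of P_n. -/
open SimpleGraph

variable {V W : Type*}

/-!
In `Pₙ ⊙ K₁` the distance between two distinct vertices is the distance of their base vertices
along the path plus one for each of the two that is a leaf. Number the path `0, …, n-1` and take
the two end leaves as landmarks: a path edge `{k, k+1}` is at distances `(k+1, n-1-k)`, with
sum `n`, an inner pendant edge at `k` at `(k+1, n-k)`, with sum `n+1`, and the two end pendant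
edges at `(0, n)` and `(n, 0)`, so all these pairs differ. One landmark never suffices when
`n ≥ 3`: the two path edges at its base vertex, or for an end leaf the next pendant edge and the
path edge beyond it, are equally far from it.
-/

namespace SimpleGraph

theorem Walk.le_add_length_of_adj_le_succ {G : SimpleGraph V} {f : V → ℕ}
    (hf : ∀ a b, G.Adj a b → f b ≤ f a + 1) {u v : V} (p : G.Walk u v) :
    f v ≤ f u + p.length := by
  induction p with
  | nil => simp
  | cons h _ ih => have := hf _ _ h; rw [Walk.length_cons]; omega

theorem edist_eq_of_potential {G : SimpleGraph V} {u : V} (f : V → ℕ) (hu : f u = 0)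
    (hlip : ∀ a b, G.Adj a b → f b ≤ f a + 1)
    (hdesc : ∀ v, v ≠ u → ∃ w, G.Adj v w ∧ f w + 1 = f v) (v : V) :
    G.edist u v = f v := by
  apply le_antisymm
  · induction hv : f v generalizing v with
    | zero =>
      obtain rfl : v = u := by_contra fun hne => by obtain ⟨w, -, hw⟩ := hdesc v hne; omega
      simp
    | succ m ih =>
      obtain ⟨w, hvw, hw⟩ := hdesc v (by rintro rfl; omega)
      calc G.edist u v ≤ G.edist u w + G.edist w v := SimpleGraph.edist_triangle
        _ ≤ m + 1 := by
          gcongr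
          · exact ih w (by omega)
          · rw [edist_comm]; exact_mod_cast hvw.toWalk.edist_le
        _ = (m + 1 : ℕ) := by push_cast; rfl
  · refine le_iInf fun p => ?_
    have := p.le_add_length_of_adj_le_succ hlip
    rw [hu, zero_add] at this
    exact_mod_cast this

end SimpleGraph

theorem IsEdgeMetricGenerator.mono {G : SimpleGraph V} {S T : Set V} (hST : S ⊆ T)
    (hS : IsEdgeMetricGenerator G S) : IsEdgeMetricGenerator G T := fun e₁ h₁ e₂ h₂ hne =>
  let ⟨w, hw, hd⟩ := hS e₁ h₁ e₂ h₂ hne; ⟨w, hST hw, hd⟩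

theorem not_isEdgeMetricGenerator_singleton {G : SimpleGraph V} {w : V}
    (h : ∃ e₁ ∈ G.edgeSet, ∃ e₂ ∈ G.edgeSet, e₁ ≠ e₂ ∧ edgeDist G w e₁ = edgeDist G w e₂) :
    ¬ IsEdgeMetricGenerator G {w} := by
  intro hgen
  obtain ⟨e₁, h₁, e₂, h₂, hne, heq⟩ := h
  obtain ⟨_, rfl, hd⟩ := hgen e₁ h₁ e₂ h₂ hne
  exact hd heq

theorem edim_eq_two_of [Finite V] [Nonempty V] {G : SimpleGraph V} {S : Set V}
    (hcard : S.ncard = 2) (hS : IsEdgeMetricGenerator G S)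
    (hsingle : ∀ w, ¬ IsEdgeMetricGenerator G {w}) : edim G = 2 := by
  refine le_antisymm (Nat.sInf_le ⟨S, hcard, hS⟩) (le_csInf ⟨2, S, hcard, hS⟩ ?_)
  rintro m ⟨T, rfl, hT⟩
  by_contra! hlt
  interval_cases h : T.ncard
  · rw [Set.ncard_eq_zero] at h
    exact hsingle (Classical.arbitrary V) (hT.mono (h ▸ Set.empty_subset _))
  · obtain ⟨w, rfl⟩ := Set.ncard_eq_one.mp h
    exact hsingle w hT

abbrev coronaPath (n : ℕ) : SimpleGraph (Fin n × Option (Fin 1)) := corona (pathGraph n) ⊥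

namespace CoronaPath

variable {n : ℕ}

def height : Option (Fin 1) → ℕ
  | none => 0
  | some _ => 1

def vertexDist (u v : Fin n × Option (Fin 1)) : ℕ :=
  if u = v then 0 else Nat.dist u.1 v.1 + height u.2 + height v.2

theorem vertexDist_le_of_adj (u : Fin n × Option (Fin 1)) {a b : Fin n × Option (Fin 1)}
    (h : (coronaPath n).Adj a b) : vertexDist u b ≤ vertexDist u a + 1 := by
  obtain ⟨i, x⟩ := u
  obtain ⟨j, _ | _⟩ := a <;> obtain ⟨k, _ | _⟩ := b <;>
    simp only [coronaPath, corona, pathGraph_adj, bot_adj, and_false] at h <;>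
    simp only [vertexDist, Prod.ext_iff, Fin.ext_iff] <;> split_ifs <;> cases x <;>
    simp_all [height, Nat.dist] <;> omega

theorem vertexDist_base (u : Fin n × Option (Fin 1)) (k : Fin n) :
    vertexDist u (k, none) = Nat.dist u.1 k + height u.2 := by
  obtain ⟨i, x⟩ := u
  unfold vertexDist
  split_ifs with h <;> simp_all [height, Prod.ext_iff]

theorem exists_adj_vertexDist_succ (u : Fin n × Option (Fin 1)) {v : Fin n × Option (Fin 1)}
    (hv : v ≠ u) : ∃ w, (coronaPath n).Adj v w ∧ vertexDist u w + 1 = vertexDist u v := by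
  obtain ⟨i, x⟩ := u
  obtain ⟨k, _ | y⟩ := v
  · rcases lt_trichotomy k.val i.val with hlt | heq | hgt
    · refine ⟨(⟨k + 1, by omega⟩, none), by simp [corona, pathGraph_adj], ?_⟩
      simp only [vertexDist_base, Nat.dist]; omega
    · obtain rfl : k = i := Fin.ext heq
      obtain _ | y := x
      · exact absurd rfl hv
      · exact ⟨(k, some y), by simp [corona], by simp [vertexDist, height]⟩
    · refine ⟨(⟨k - 1, by omega⟩, none), by simp [corona, pathGraph_adj]; omega, ?_⟩
      simp only [vertexDist_base, Nat.dist]; omega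
  · refine ⟨(k, none), by simp [corona], ?_⟩
    rw [vertexDist_base, vertexDist, if_neg hv.symm]
    rfl

theorem edist_eq_vertexDist (u v : Fin n × Option (Fin 1)) :
    (coronaPath n).edist u v = vertexDist u v :=
  edist_eq_of_potential (vertexDist u) (by simp [vertexDist]) (fun _ _ => vertexDist_le_of_adj u)
    (fun _ => exists_adj_vertexDist_succ u) v

theorem edgeDist_mk (w a b : Fin n × Option (Fin 1)) :
    edgeDist (coronaPath n) w s(a, b) = (min (vertexDist w a) (vertexDist w b) : ℕ) := by
  simp only [edgeDist, Sym2.lift_mk, edist_eq_vertexDist]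
  exact (Nat.mono_cast.map_min).symm

theorem edgeDist_pathEdge (w : Fin n × Option (Fin 1)) (k l : Fin n) :
    edgeDist (coronaPath n) w s((k, none), (l, none)) =
      (min (Nat.dist w.1 k) (Nat.dist w.1 l) + height w.2 : ℕ) := by
  rw [edgeDist_mk, vertexDist_base, vertexDist_base, min_add_add_right]

theorem edgeDist_pendantEdge (w : Fin n × Option (Fin 1)) (k : Fin n) :
    edgeDist (coronaPath n) w s((k, none), (k, some 0)) =
      (if w = (k, some 0) then 0 else Nat.dist w.1 k + height w.2 : ℕ) := by
  rw [edgeDist_mk, vertexDist_base, vertexDist]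
  split_ifs <;> simp_all

theorem mem_edgeSet_cases {e : Sym2 (Fin n × Option (Fin 1))}
    (he : e ∈ (coronaPath n).edgeSet) :
    (∃ k l : Fin n, k.val + 1 = l.val ∧ e = s((k, none), (l, none))) ∨
      ∃ k : Fin n, e = s((k, none), (k, some 0)) := by
  induction e using Sym2.ind with | _ a b =>
  obtain ⟨j, _ | y⟩ := a <;> obtain ⟨k, _ | z⟩ := b <;>
    simp only [mem_edgeSet, coronaPath, corona, pathGraph_adj, bot_adj, and_false] at he
  · rcases he with h | h
    · exact .inl ⟨j, k, h, rfl⟩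
    · exact .inl ⟨k, j, h, Sym2.eq_swap⟩
  · subst he; exact .inr ⟨j, by rw [Subsingleton.elim z 0]⟩
  · subst he; exact .inr ⟨j, by rw [Subsingleton.elim y 0, Sym2.eq_swap]⟩

theorem pathEdge_mem_edgeSet {k l : Fin n} (h : k.val + 1 = l.val) :
    s((k, none), (l, none)) ∈ (coronaPath n).edgeSet := by
  simp [corona, pathGraph_adj, h]

theorem pendantEdge_mem_edgeSet (k : Fin n) :
    s((k, none), (k, some 0)) ∈ (coronaPath n).edgeSet := by
  simp [corona]

theorem isEdgeMetricGenerator_end_leaves :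
    IsEdgeMetricGenerator (coronaPath (n + 1)) {(0, some 0), (Fin.last n, some 0)} := by
  intro e₁ h₁ e₂ h₂ hne
  by_contra! hsame
  have ha := hsame _ (Set.mem_insert _ _)
  have hb := hsame _ (Set.mem_insert_of_mem _ rfl)
  refine hne ?_
  rcases mem_edgeSet_cases h₁ with ⟨k₁, l₁, hkl₁, rfl⟩ | ⟨k₁, rfl⟩ <;>
    rcases mem_edgeSet_cases h₂ with ⟨k₂, l₂, hkl₂, rfl⟩ | ⟨k₂, rfl⟩ <;>
    simp only [edgeDist_pathEdge, edgeDist_pendantEdge, Nat.cast_inj, Prod.mk.injEq, Fin.ext_iff,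
      Fin.val_zero, Fin.val_last, and_true, height, Nat.dist] at ha hb
  · obtain rfl : k₁ = k₂ := Fin.ext (by omega)
    obtain rfl : l₁ = l₂ := Fin.ext (by omega)
    rfl
  · exfalso; have := l₁.isLt; split_ifs at ha hb; omega
  · exfalso; have := l₂.isLt; split_ifs at ha hb; omega
  · obtain rfl : k₁ = k₂ := Fin.ext (by split_ifs at ha <;> omega)
    rfl

theorem exists_ne_edgeDist_eq (hn : 3 ≤ n) (w : Fin n × Option (Fin 1)) :
    ∃ e₁ ∈ (coronaPath n).edgeSet, ∃ e₂ ∈ (coronaPath n).edgeSet,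
      e₁ ≠ e₂ ∧ edgeDist (coronaPath n) w e₁ = edgeDist (coronaPath n) w e₂ := by
  obtain ⟨j, x⟩ := w
  have hj := j.isLt
  by_cases h0 : j.val = 0
  · refine ⟨_, pendantEdge_mem_edgeSet ⟨1, by omega⟩,
      _, pathEdge_mem_edgeSet (k := ⟨1, by omega⟩) (l := ⟨2, by omega⟩) rfl, by simp, ?_⟩
    rw [edgeDist_pendantEdge, if_neg fun h => by simp only [Prod.ext_iff, Fin.ext_iff] at h; omega,
      edgeDist_pathEdge, Nat.cast_inj]
    simp only [Nat.dist]; omega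
  by_cases hl : j.val = n - 1
  · refine ⟨_, pendantEdge_mem_edgeSet ⟨n - 2, by omega⟩,
      _, pathEdge_mem_edgeSet (k := ⟨n - 3, by omega⟩) (l := ⟨n - 2, by omega⟩) (by simp; omega),
      by simp, ?_⟩
    rw [edgeDist_pendantEdge, if_neg fun h => by simp only [Prod.ext_iff, Fin.ext_iff] at h; omega,
      edgeDist_pathEdge, Nat.cast_inj]
    simp only [Nat.dist]; omega
  · refine ⟨_, pathEdge_mem_edgeSet (k := ⟨j - 1, by omega⟩) (l := j) (by simp; omega),
      _, pathEdge_mem_edgeSet (k := j) (l := ⟨j + 1, by omega⟩) rfl, ?_, ?_⟩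
    · simp [Fin.ext_iff]
    · rw [edgeDist_pathEdge, edgeDist_pathEdge, Nat.cast_inj]
      simp only [Nat.dist]; omega

end CoronaPath

theorem edim_corona_path_K1 (n : ℕ) (hn : 3 ≤ n) :
    edim (corona (pathGraph n) (⊥ : SimpleGraph (Fin 1))) = 2 := by
  obtain ⟨m, rfl⟩ : ∃ m, n = m + 1 := ⟨n - 1, by omega⟩
  have hcard :
      ({(0, some 0), (Fin.last m, some 0)} : Set (Fin (m + 1) × Option (Fin 1))).ncard = 2 :=
    Set.ncard_pair fun h => by
      simp only [Prod.ext_iff, Fin.ext_iff, Fin.val_zero, Fin.val_last] at h; omega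
  exact edim_eq_two_of hcard CoronaPath.isEdgeMetricGenerator_end_leaves
    fun w => not_isEdgeMetricGenerator_singleton (CoronaPath.exists_ne_edgeDist_eq hn w)
end
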